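/- Let K be a commutative ring with unit, X a set, Ω a set of operation symbols, and let > be a monomial ordering on the free operated semigroup 𝔖(X). Let S be a Gröbner–Shirshov basis in K⟨X;Ω⟩, let u₁, u₂ be ⋆-Ω-words, and let s₁, s₂ ∈ S. If w = u₁|_{s̄₁} = u₂|_{s̄₂}, then u₁|_{s₁} ≡ u₂|_{s₂} mod (S, w); that is, u₁|_{s₁} − u₂|_{s₂} = Σᵢ αᵢ vᵢ|_{tᵢ} for some αᵢ ∈ K, ⋆-Ω-words vᵢ, and tᵢ ∈ S with vᵢ|_{t̄ᵢ} < w. -/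

import Mathlib

universe u v

/-! ### The free semigroup `𝔖(X)` with multiple operators `Ω` on a set `X`.

`Ω` is a set of operation symbols, `ar δ` is the arity of the symbol `δ`.
An `Ω`-word is a nonempty product of prime `Ω`-words, and a prime `Ω`-word is either a
letter `x ∈ X` or an expression `δ(u₁, …, u_{ar δ})` with each `uᵢ` an `Ω`-word. -/

mutual
/-- Prime `Ω`-words on `X`: letters and expressions `δ(u₁, …, u_{ar δ})`. -/
inductive OpP (X : Type u) (Ω : Type v) (ar : Ω → ℕ) : Type (max u v)
  | letter : X → OpP X Ω ar
  | node (δ : Ω) (args : OpArgs X Ω ar (ar δ)) : OpP X Ω ar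
/-- `Ω`-words on `X`: nonempty words in prime `Ω`-words.  This is the free operated
semigroup `𝔖(X)`. -/
inductive OpW (X : Type u) (Ω : Type v) (ar : Ω → ℕ) : Type (max u v)
  | single : OpP X Ω ar → OpW X Ω ar
  | cons : OpP X Ω ar → OpW X Ω ar → OpW X Ω ar
/-- Tuples `(u₁, …, uₙ)` of `Ω`-words (arguments of an operation symbol). -/
inductive OpArgs (X : Type u) (Ω : Type v) (ar : Ω → ℕ) : ℕ → Type (max u v)
  | nil : OpArgs X Ω ar 0
  | cons {n : ℕ} : OpW X Ω ar → OpArgs X Ω ar n → OpArgs X Ω ar (n + 1)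
end

variable {X : Type u} {Ω : Type v} {ar : Ω → ℕ}

/-- Concatenation of `Ω`-words. -/
def OpW.append : OpW X Ω ar → OpW X Ω ar → OpW X Ω ar
  | .single p, w => .cons p w
  | .cons p u, w => .cons p (u.append w)

theorem OpW.append_assoc : ∀ a b c : OpW X Ω ar,
    (a.append b).append c = a.append (b.append c)
  | .single _, _, _ => rfl
  | .cons p u, b, c => by
      simp only [OpW.append]
      exact congrArg (OpW.cons p) (OpW.append_assoc u b c)

/-- `𝔖(X)` is a semigroup under concatenation. -/
instance : Semigroup (OpW X Ω ar) where
  mul := OpW.append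
  mul_assoc := OpW.append_assoc

/-- The word consisting of the single letter `x`. -/
def OpW.ofX (x : X) : OpW X Ω ar := .single (.letter x)

/-- The list of prime factors of an `Ω`-word. -/
def OpW.toListP : OpW X Ω ar → List (OpP X Ω ar)
  | .single p => [p]
  | .cons p u => p :: u.toListP

/-- The breadth `bre(u)` of an `Ω`-word: its number of prime factors. -/
def OpW.bre (u : OpW X Ω ar) : ℕ := u.toListP.length

mutual
/-- Weighted count of the letters occurring (anywhere) in a prime `Ω`-word. -/
def OpP.cnt (c : X → ℕ) : OpP X Ω ar → ℕ
  | .letter x => c x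
  | .node _ args => args.cntA c
/-- Weighted count of the letters occurring (anywhere) in an `Ω`-word. -/
def OpW.cnt (c : X → ℕ) : OpW X Ω ar → ℕ
  | .single p => p.cnt c
  | .cons p u => p.cnt c + u.cnt c
/-- Weighted count of the letters occurring in a tuple of `Ω`-words. -/
def OpArgs.cntA (c : X → ℕ) : ∀ {n : ℕ}, OpArgs X Ω ar n → ℕ
  | _, .nil => 0
  | _, .cons w rest => w.cnt c + rest.cntA c
end

mutual
/-- Weighted count of the operation symbols occurring in a prime `Ω`-word. -/
def OpP.opCnt (c : Ω → ℕ) : OpP X Ω ar → ℕ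
  | .letter _ => 0
  | .node δ args => c δ + args.opCntA c
/-- Weighted count of the operation symbols occurring in an `Ω`-word. -/
def OpW.opCnt (c : Ω → ℕ) : OpW X Ω ar → ℕ
  | .single p => p.opCnt c
  | .cons p u => p.opCnt c + u.opCnt c
/-- Weighted count of the operation symbols occurring in a tuple of `Ω`-words. -/
def OpArgs.opCntA (c : Ω → ℕ) : ∀ {n : ℕ}, OpArgs X Ω ar n → ℕ
  | _, .nil => 0
  | _, .cons w rest => w.opCnt c + rest.opCntA c
end

/-! `⋆`-`Ω`-words are `Ω`-words on the alphabet `X ∪ {⋆}` (realized as `Option X`, the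
star being `none`) with exactly one occurrence of the star. -/

mutual
/-- Substitution of the `Ω`-word `w` for every occurrence of the star in a prime. -/
def OpP.subst (w : OpW X Ω ar) : OpP (Option X) Ω ar → OpW X Ω ar
  | .letter none => w
  | .letter (some x) => .single (.letter x)
  | .node δ args => .single (.node δ (args.substA w))
/-- Substitution of the `Ω`-word `w` for every occurrence of the star in a word. -/
def OpW.subst (w : OpW X Ω ar) : OpW (Option X) Ω ar → OpW X Ω ar
  | .single p => OpP.subst w p
  | .cons p u => (OpP.subst w p).append (OpW.subst w u)
/-- Substitution of the `Ω`-word `w` for every occurrence of the star in a tuple. -/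
def OpArgs.substA (w : OpW X Ω ar) : ∀ {n : ℕ}, OpArgs (Option X) Ω ar n → OpArgs X Ω ar n
  | _, .nil => .nil
  | _, .cons a rest => .cons (OpW.subst w a) (OpArgs.substA w rest)
end

/-- The number of occurrences of the star `⋆` in a word on `X ∪ {⋆}`. -/
def starCt (u : OpW (Option X) Ω ar) : ℕ :=
  u.cnt (fun o => match o with | none => 1 | some _ => 0)

/-- `u` is a `⋆`-`Ω`-word: it has exactly one occurrence of the star `⋆`. -/
def IsStar (u : OpW (Option X) Ω ar) : Prop := starCt u = 1

/-- `u|_w`: the result of substituting the `Ω`-word `w` for the star in `u`. -/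
def substW (u : OpW (Option X) Ω ar) (w : OpW X Ω ar) : OpW X Ω ar := OpW.subst w u

/-! ### The free associative algebra `K⟨X; Ω⟩` with multiple linear operators -/

/-- `K⟨X; Ω⟩`: the free `K`-module on `𝔖(X)` with the concatenation (convolution)
product; the free (nonunital) associative `K`-algebra with multiple linear operators. -/
abbrev OpAlg (K : Type w) [CommRing K] (X : Type u) (Ω : Type v) (ar : Ω → ℕ) :=
  MonoidAlgebra K (OpW X Ω ar)

section Framework

variable {K : Type*} [CommRing K]

/-- `u|_s` for an `Ω`-polynomial `s`: the linear extension of substitution, the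
`s`-`Ω`-word associated to the `⋆`-`Ω`-word `u`. -/
noncomputable def substPoly (u : OpW (Option X) Ω ar) (s : OpAlg K X Ω ar) :
    OpAlg K X Ω ar :=
  s.coeff.sum fun w c => MonoidAlgebra.single (substW u w) c

variable (lt : OpW X Ω ar → OpW X Ω ar → Prop)

/-- `w` is the leading `Ω`-word `f̄` of `f` with respect to the order `lt`. -/
def HasLead (f : OpAlg K X Ω ar) (w : OpW X Ω ar) : Prop :=
  w ∈ f.coeff.support ∧ ∀ v ∈ f.coeff.support, v ≠ w → lt v w

/-- `f` is monic with leading word `w`: the coefficient of `f̄ = w` in `f` is `1`. -/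
def MonicAt (f : OpAlg K X Ω ar) (w : OpW X Ω ar) : Prop :=
  HasLead lt f w ∧ f.coeff w = 1

/-- The `Ω`-ideal `Id(S)` generated by `S`: the `K`-span of all `u|_s` with `u` a
`⋆`-`Ω`-word and `s ∈ S`. -/
noncomputable def IdS (S : Set (OpAlg K X Ω ar)) : Submodule K (OpAlg K X Ω ar) :=
  Submodule.span K {q | ∃ u s, IsStar u ∧ s ∈ S ∧ q = substPoly u s}

/-- `p ≡ 0 mod (S, w)`: `p` is a `K`-linear combination of `s`-words `uᵢ|_{sᵢ}`, `sᵢ ∈ S`,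
with `uᵢ|_{s̄ᵢ} < w`. -/
def TrivialMod (S : Set (OpAlg K X Ω ar)) (w : OpW X Ω ar) (p : OpAlg K X Ω ar) : Prop :=
  p ∈ Submodule.span K
    {q | ∃ u s ws, IsStar u ∧ s ∈ S ∧ HasLead lt s ws ∧ lt (substW u ws) w ∧
      q = substPoly u s}

/-- `S` is a Gröbner–Shirshov basis in `K⟨X; Ω⟩` (with respect to the monomial order
`lt`): `S` consists of monic `Ω`-polynomials, and every intersection composition and
inclusion composition of elements of `S` is trivial modulo `(S, w)`. -/
def IsGSB (S : Set (OpAlg K X Ω ar)) : Prop :=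
  (∀ s ∈ S, ∃ w, MonicAt lt s w) ∧
  -- intersection compositions `(f, g)_w = f a - b g`, `w = f̄ a = b ḡ`,
  -- `bre(w) < bre(f̄) + bre(ḡ)`:
  (∀ f ∈ S, ∀ g ∈ S, ∀ wf wg a b : OpW X Ω ar,
    HasLead lt f wf → HasLead lt g wg → wf * a = b * wg →
    OpW.bre (wf * a) < OpW.bre wf + OpW.bre wg →
    TrivialMod lt S (wf * a) (f * MonoidAlgebra.single a 1 - MonoidAlgebra.single b 1 * g)) ∧
  -- inclusion compositions `(f, g)_w = f - u|_g`, `w = f̄ = u|_{ḡ}`: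
  (∀ f ∈ S, ∀ g ∈ S, ∀ wf wg : OpW X Ω ar, ∀ u : OpW (Option X) Ω ar,
    HasLead lt f wf → HasLead lt g wg → IsStar u → wf = substW u wg →
    TrivialMod lt S wf (f - substPoly u g))

/-- `Irr(S)`: the set of `Ω`-words which are not of the form `u|_{s̄}` for a `⋆`-`Ω`-word
`u` and `s ∈ S`. -/
def IrrSet (S : Set (OpAlg K X Ω ar)) : Set (OpW X Ω ar) :=
  {w | ¬ ∃ u s ws, IsStar u ∧ s ∈ S ∧ HasLead lt s ws ∧ w = substW u ws}

end Framework

/-!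
Write `w = u₁|_{w₁} = u₂|_{w₂}` and compare the two occurrences of leading words in `w`.
Splitting `w` into prime factors, and descending into the arguments of an operator whenever
both stars sit in the same argument slot, the occurrences are disjoint, nested, or overlap
within one layer of `w`.

If they are nested or overlap, `u₁|_{s₁} - u₂|_{s₂}` is the image under a `⋆`-word `U` of an
inclusion or intersection composition of `s₁` and `s₂`, which is trivial by hypothesis, and
substitution into `⋆`-words preserves triviality because the ordering is monomial.

If they are disjoint, let `c(z, z')` be `w` with the two occurrences replaced by `z` and `z'`.
Since `s₁` and `s₂` are monic, `u₁|_{s₁}` and `u₂|_{s₂}` both differ from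
`Σ s₁(z) s₂(z') c(z, z')` by combinations of `c(z, ⋆)|_{s₂}` with `z < w₁` and of
`c(⋆, z')|_{s₁}` with `z' < w₂`, whose leading words lie below `w`.
-/

/-! ### Splitting lists -/

theorem List.exists_eq_append_cons_of_sum_map_eq_one {α : Type*} {f : α → ℕ} :
    ∀ {t : List α}, (t.map f).sum = 1 →
      ∃ l a r, t = l ++ a :: r ∧ f a = 1 ∧ (∀ x ∈ l, f x = 0) ∧ ∀ x ∈ r, f x = 0
  | [], h => by simp at h
  | b :: t, h => by
      rw [List.map_cons, List.sum_cons] at h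
      obtain hb | hb : f b = 0 ∨ f b = 1 := by omega
      · rw [hb, zero_add] at h
        obtain ⟨l, a, r, rfl, ha, hl, hr⟩ := exists_eq_append_cons_of_sum_map_eq_one h
        exact ⟨b :: l, a, r, rfl, ha, List.forall_mem_cons.2 ⟨hb, hl⟩, hr⟩
      · refine ⟨[], b, t, rfl, hb, by simp, ?_⟩
        simpa [List.sum_eq_zero_iff] using (by omega : (t.map f).sum = 0)

theorem List.exists_eq_append_of_append_eq_append {α : Type*} {l₁ t₁ l₂ t₂ : List α}
    (h : l₁ ++ t₁ = l₂ ++ t₂) (hl : l₁.length ≤ l₂.length) :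
    ∃ m, l₂ = l₁ ++ m ∧ t₁ = m ++ t₂ := by
  rcases List.append_eq_append_iff.1 h with h | ⟨m, rfl, rfl⟩
  · exact h
  · obtain rfl : m = [] := by simpa using hl
    exact ⟨[], by simp, rfl⟩

theorem List.append_cons_eq_append_cons_cases {α : Type*} {A B C D : List α} {x y : α}
    (h : A ++ x :: B = C ++ y :: D) :
    (A = C ∧ x = y ∧ B = D) ∨ (∃ E, C = A ++ x :: E ∧ B = E ++ y :: D) ∨
      (∃ E, A = C ++ y :: E ∧ D = E ++ x :: B) := by
  rcases List.append_eq_append_iff.1 h with ⟨E, rfl, hE⟩ | ⟨E, rfl, hE⟩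
  · rcases List.cons_eq_append_iff.1 hE with ⟨rfl, h⟩ | ⟨E, rfl, rfl⟩
    · simp_all
    · exact .inr (.inl ⟨E, rfl, rfl⟩)
  · rcases List.cons_eq_append_iff.1 hE with ⟨rfl, h⟩ | ⟨E, rfl, rfl⟩
    · simp_all
    · exact .inr (.inr ⟨E, rfl, rfl⟩)

theorem List.append_append_eq_append_append_cases {α : Type*} {l₁ s₁ r₁ l₂ s₂ r₂ : List α}
    (h : l₁ ++ s₁ ++ r₁ = l₂ ++ s₂ ++ r₂) (hl : l₁.length ≤ l₂.length) :
    (∃ m, l₂ = l₁ ++ s₁ ++ m ∧ r₁ = m ++ s₂ ++ r₂) ∨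
    (∃ b c, s₁ = b ++ s₂ ++ c ∧ l₂ = l₁ ++ b ∧ r₂ = c ++ r₁) ∨
    (∃ c, c ≠ [] ∧ l₂ = l₁ ∧ s₂ = s₁ ++ c ∧ r₁ = c ++ r₂) ∨
    (∃ b a, b ≠ [] ∧ a ≠ [] ∧ a.length < s₂.length ∧ s₁ ++ a = b ++ s₂ ∧
      l₂ = l₁ ++ b ∧ r₁ = a ++ r₂) := by
  simp only [List.append_assoc] at h
  obtain ⟨m, rfl, h₁⟩ := exists_eq_append_of_append_eq_append h hl
  by_cases hm : s₁.length ≤ m.length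
  · obtain ⟨m', rfl, rfl⟩ := exists_eq_append_of_append_eq_append h₁ hm
    exact .inl ⟨m', by simp, by simp⟩
  obtain ⟨s, rfl, h₂⟩ := exists_eq_append_of_append_eq_append h₁.symm (by omega)
  by_cases hs : s₂.length ≤ s.length
  · obtain ⟨c, rfl, rfl⟩ := exists_eq_append_of_append_eq_append h₂ hs
    exact .inr (.inl ⟨m, c, by simp, rfl, rfl⟩)
  obtain ⟨a, rfl, rfl⟩ := exists_eq_append_of_append_eq_append h₂.symm (by omega)
  have ha : a ≠ [] := by rintro rfl; simp at hs
  rcases eq_or_ne m [] with rfl | hm₀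
  · exact .inr (.inr (.inl ⟨a, ha, by simp, by simp, rfl⟩))
  · have : s ≠ [] := by rintro rfl; simp at hm
    exact .inr (.inr (.inr ⟨m, a, hm₀, ha, by simpa [List.length_pos_iff], by simp, rfl, rfl⟩))

/-! ### Words as lists of prime factors -/

namespace OpW

theorem toListP_ne_nil (u : OpW X Ω ar) : u.toListP ≠ [] := by
  cases u <;> simp [toListP]

theorem toListP_injective : Function.Injective (toListP : OpW X Ω ar → List (OpP X Ω ar))
  | .single _, .single _, h => by simpa [toListP] using h
  | .single _, .cons _ v, h => by simp [toListP, (toListP_ne_nil v).symm] at h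
  | .cons _ u, .single _, h => by simp [toListP, toListP_ne_nil] at h
  | .cons _ u, .cons _ v, h => by
      simp only [toListP, List.cons.injEq] at h
      rw [h.1, toListP_injective h.2]

theorem toListP_append : ∀ a b : OpW X Ω ar, (a.append b).toListP = a.toListP ++ b.toListP
  | .single _, _ => rfl
  | .cons _ u, b => by simp [append, toListP, toListP_append u b]

theorem toListP_mul (a b : OpW X Ω ar) : (a * b).toListP = a.toListP ++ b.toListP :=
  toListP_append a b

theorem cnt_append (c : X → ℕ) : ∀ a b : OpW X Ω ar, (a.append b).cnt c = a.cnt c + b.cnt c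
  | .single _, _ => rfl
  | .cons _ u, b => by simp [append, cnt, cnt_append c u b, Nat.add_assoc]

theorem cnt_eq_sum (c : X → ℕ) :
    ∀ u : OpW X Ω ar, u.cnt c = (u.toListP.map (OpP.cnt c)).sum
  | .single _ => by simp [toListP, cnt]
  | .cons _ u => by simp [toListP, cnt, cnt_eq_sum c u]

theorem opCnt_eq_sum (c : Ω → ℕ) :
    ∀ u : OpW X Ω ar, u.opCnt c = (u.toListP.map (OpP.opCnt c)).sum
  | .single _ => by simp [toListP, opCnt]
  | .cons _ u => by simp [toListP, opCnt, opCnt_eq_sum c u]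

def ofCons (p : OpP X Ω ar) : List (OpP X Ω ar) → OpW X Ω ar
  | [] => single p
  | q :: l => cons p (ofCons q l)

theorem toListP_ofCons (p : OpP X Ω ar) (l : List (OpP X Ω ar)) :
    (ofCons p l).toListP = p :: l := by
  induction l generalizing p with
  | nil => rfl
  | cons q l ih => simp [ofCons, toListP, ih]

theorem exists_toListP_eq {l : List (OpP X Ω ar)} (hl : l ≠ []) :
    ∃ u : OpW X Ω ar, u.toListP = l := by
  obtain ⟨p, l, rfl⟩ := List.exists_cons_of_ne_nil hl
  exact ⟨ofCons p l, toListP_ofCons p l⟩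

theorem toListP_foldr_cons (l : List (OpP X Ω ar)) (u : OpW X Ω ar) :
    (l.foldr cons u).toListP = l ++ u.toListP := by
  induction l with
  | nil => rfl
  | cons p l ih => simp [toListP, ih]

end OpW

namespace OpArgs

def toList : ∀ {n : ℕ}, OpArgs X Ω ar n → List (OpW X Ω ar)
  | _, nil => []
  | _, cons w a => w :: a.toList

def ofList : (l : List (OpW X Ω ar)) → OpArgs X Ω ar l.length
  | [] => nil
  | w :: l => cons w (ofList l)

theorem length_toList : ∀ {n : ℕ} (a : OpArgs X Ω ar n), a.toList.length = n
  | _, nil => rfl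
  | _, cons _ a => by simp [toList, length_toList a]

theorem toList_injective : ∀ {n : ℕ} {a b : OpArgs X Ω ar n}, a.toList = b.toList → a = b
  | _, nil, nil, _ => rfl
  | _, cons _ a, cons _ b, h => by
      simp only [toList, List.cons.injEq] at h
      rw [h.1, toList_injective h.2]

theorem toList_ofList : ∀ l : List (OpW X Ω ar), (ofList l).toList = l
  | [] => rfl
  | w :: l => by simp [ofList, toList, toList_ofList l]

theorem toList_cast {m n : ℕ} (h : m = n) (a : OpArgs X Ω ar m) : (h ▸ a).toList = a.toList := by
  subst h; rfl

theorem toList_substA (z : OpW X Ω ar) :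
    ∀ {n : ℕ} (a : OpArgs (Option X) Ω ar n), (substA z a).toList = a.toList.map (OpW.subst z)
  | _, nil => rfl
  | _, cons _ a => by simp [substA, toList, toList_substA z a]

theorem cntA_eq_sum (c : X → ℕ) :
    ∀ {n : ℕ} (a : OpArgs X Ω ar n), a.cntA c = (a.toList.map (OpW.cnt c)).sum
  | _, nil => rfl
  | _, cons _ a => by simp [cntA, toList, cntA_eq_sum c a]

theorem opCntA_eq_sum (c : Ω → ℕ) :
    ∀ {n : ℕ} (a : OpArgs X Ω ar n), a.opCntA c = (a.toList.map (OpW.opCnt c)).sum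
  | _, nil => rfl
  | _, cons _ a => by simp [opCntA, toList, opCntA_eq_sum c a]

end OpArgs

namespace OpP

def nodeOfList (δ : Ω) (l : List (OpW X Ω ar)) (h : l.length = ar δ) : OpP X Ω ar :=
  node δ (h ▸ OpArgs.ofList l)

theorem node_eq_nodeOfList (δ : Ω) (a : OpArgs X Ω ar (ar δ)) :
    node δ a = nodeOfList δ a.toList (a.length_toList) := by
  rw [nodeOfList]
  congr 1
  apply OpArgs.toList_injective
  rw [OpArgs.toList_cast, OpArgs.toList_ofList]

theorem nodeOfList_inj {δ₁ δ₂ : Ω} {l₁ l₂ : List (OpW X Ω ar)} {h₁ : l₁.length = ar δ₁}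
    {h₂ : l₂.length = ar δ₂} : nodeOfList δ₁ l₁ h₁ = nodeOfList δ₂ l₂ h₂ ↔ δ₁ = δ₂ ∧ l₁ = l₂ := by
  refine ⟨fun h => ?_, by rintro ⟨rfl, rfl⟩; rfl⟩
  simp only [nodeOfList, node.injEq] at h
  obtain ⟨rfl, h⟩ := h
  refine ⟨rfl, ?_⟩
  simpa [OpArgs.toList_cast, OpArgs.toList_ofList] using congrArg OpArgs.toList (eq_of_heq h)

theorem subst_nodeOfList (z : OpW X Ω ar) (δ : Ω) (l : List (OpW (Option X) Ω ar))
    (h : l.length = ar δ) :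
    subst z (nodeOfList δ l h) = .single (nodeOfList δ (l.map (OpW.subst z)) (by simpa)) := by
  simp only [nodeOfList, subst, OpW.single.injEq, node.injEq, heq_eq_eq, true_and]
  apply OpArgs.toList_injective
  simp [OpArgs.toList_substA, OpArgs.toList_cast, OpArgs.toList_ofList]

theorem cnt_nodeOfList (c : X → ℕ) (δ : Ω) (l : List (OpW X Ω ar)) (h : l.length = ar δ) :
    (nodeOfList δ l h).cnt c = (l.map (OpW.cnt c)).sum := by
  rw [nodeOfList, cnt, OpArgs.cntA_eq_sum, OpArgs.toList_cast, OpArgs.toList_ofList]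

theorem opCnt_nodeOfList (c : Ω → ℕ) (δ : Ω) (l : List (OpW X Ω ar)) (h : l.length = ar δ) :
    (nodeOfList δ l h).opCnt c = c δ + (l.map (OpW.opCnt c)).sum := by
  rw [nodeOfList, opCnt, OpArgs.opCntA_eq_sum, OpArgs.toList_cast, OpArgs.toList_ofList]

end OpP

/-! ### Star words -/

def starWeight : Option X → ℕ := fun o => match o with | none => 1 | some _ => 0

theorem starCt_eq_cnt (u : OpW (Option X) Ω ar) : starCt u = u.cnt starWeight := rfl

mutual
def OpP.embed : OpP X Ω ar → OpP (Option X) Ω ar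
  | .letter x => .letter (some x)
  | .node δ a => .node δ (OpArgs.embed a)
def OpW.embed : OpW X Ω ar → OpW (Option X) Ω ar
  | .single p => .single (OpP.embed p)
  | .cons p u => .cons (OpP.embed p) (OpW.embed u)
def OpArgs.embed : ∀ {n : ℕ}, OpArgs X Ω ar n → OpArgs (Option X) Ω ar n
  | _, .nil => .nil
  | _, .cons w a => .cons (OpW.embed w) (OpArgs.embed a)
end

mutual
theorem OpP.subst_embed (z : OpW X Ω ar) : ∀ p : OpP X Ω ar, OpP.subst z p.embed = .single p
  | .letter _ => rfl
  | .node δ a => by rw [OpP.embed, OpP.subst, OpArgs.substA_embed]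
theorem OpW.subst_embed (z : OpW X Ω ar) : ∀ u : OpW X Ω ar, OpW.subst z u.embed = u
  | .single p => by rw [OpW.embed, OpW.subst, OpP.subst_embed]
  | .cons p u => by rw [OpW.embed, OpW.subst, OpP.subst_embed, OpW.subst_embed]; rfl
theorem OpArgs.substA_embed (z : OpW X Ω ar) :
    ∀ {n : ℕ} (a : OpArgs X Ω ar n), OpArgs.substA z a.embed = a
  | _, .nil => rfl
  | _, .cons w a => by rw [OpArgs.embed, OpArgs.substA, OpW.subst_embed, OpArgs.substA_embed]
end

@[simp]
theorem OpW.subst_comp_embed (z : OpW X Ω ar) : OpW.subst z ∘ OpW.embed = id :=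
  funext (OpW.subst_embed z)

mutual
theorem OpP.cnt_embed : ∀ p : OpP X Ω ar, p.embed.cnt starWeight = 0
  | .letter _ => rfl
  | .node δ a => by rw [OpP.embed, OpP.cnt, OpArgs.cntA_embed]
theorem OpW.cnt_embed : ∀ u : OpW X Ω ar, u.embed.cnt starWeight = 0
  | .single p => by rw [OpW.embed, OpW.cnt, OpP.cnt_embed]
  | .cons p u => by rw [OpW.embed, OpW.cnt, OpP.cnt_embed, OpW.cnt_embed]
theorem OpArgs.cntA_embed : ∀ {n : ℕ} (a : OpArgs X Ω ar n), a.embed.cntA starWeight = 0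
  | _, .nil => rfl
  | _, .cons w a => by rw [OpArgs.embed, OpArgs.cntA, OpW.cnt_embed, OpArgs.cntA_embed]
end

mutual
theorem OpP.exists_embed_eq :
    ∀ p : OpP (Option X) Ω ar, p.cnt starWeight = 0 → ∃ q : OpP X Ω ar, q.embed = p
  | .letter none, h => absurd h one_ne_zero
  | .letter (some x), _ => ⟨.letter x, rfl⟩
  | .node δ a, h => by
      obtain ⟨b, rfl⟩ := OpArgs.exists_embed_eq a h
      exact ⟨.node δ b, rfl⟩
theorem OpW.exists_embed_eq :
    ∀ u : OpW (Option X) Ω ar, u.cnt starWeight = 0 → ∃ v : OpW X Ω ar, v.embed = u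
  | .single p, h => by
      obtain ⟨q, rfl⟩ := OpP.exists_embed_eq p h
      exact ⟨.single q, rfl⟩
  | .cons p u, h => by
      rw [OpW.cnt, Nat.add_eq_zero_iff] at h
      obtain ⟨q, rfl⟩ := OpP.exists_embed_eq p h.1
      obtain ⟨v, rfl⟩ := OpW.exists_embed_eq u h.2
      exact ⟨.cons q v, rfl⟩
theorem OpArgs.exists_embed_eq : ∀ {n : ℕ} (a : OpArgs (Option X) Ω ar n),
    a.cntA starWeight = 0 → ∃ b : OpArgs X Ω ar n, b.embed = a
  | _, .nil, _ => ⟨.nil, rfl⟩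
  | _, .cons w a, h => by
      rw [OpArgs.cntA, Nat.add_eq_zero_iff] at h
      obtain ⟨v, rfl⟩ := OpW.exists_embed_eq w h.1
      obtain ⟨b, rfl⟩ := OpArgs.exists_embed_eq a h.2
      exact ⟨.cons v b, rfl⟩
end

instance : CanLift (OpP (Option X) Ω ar) (OpP X Ω ar) OpP.embed
    (fun p => p.cnt starWeight = 0) :=
  ⟨OpP.exists_embed_eq⟩

instance : CanLift (OpW (Option X) Ω ar) (OpW X Ω ar) OpW.embed
    (fun u => u.cnt starWeight = 0) :=
  ⟨OpW.exists_embed_eq⟩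

theorem OpW.subst_append (z : OpW X Ω ar) : ∀ a b : OpW (Option X) Ω ar,
    OpW.subst z (a.append b) = (OpW.subst z a).append (OpW.subst z b)
  | .single _, _ => rfl
  | .cons _ u, b => by simp [OpW.append, OpW.subst, OpW.subst_append z u b, OpW.append_assoc]

mutual
def OpP.plug : OpP (Option X) Ω ar → OpW (Option X) Ω ar → OpW (Option X) Ω ar
  | .letter none, v => v
  | .letter (some x), _ => .single (.letter (some x))
  | .node δ a, v => .single (.node δ (OpArgs.plug a v))
def OpW.plug : OpW (Option X) Ω ar → OpW (Option X) Ω ar → OpW (Option X) Ω ar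
  | .single p, v => OpP.plug p v
  | .cons p u, v => (OpP.plug p v).append (OpW.plug u v)
def OpArgs.plug : ∀ {n : ℕ}, OpArgs (Option X) Ω ar n → OpW (Option X) Ω ar →
    OpArgs (Option X) Ω ar n
  | _, .nil, _ => .nil
  | _, .cons w a, v => .cons (OpW.plug w v) (OpArgs.plug a v)
end

mutual
theorem OpP.subst_plug (z : OpW X Ω ar) (v : OpW (Option X) Ω ar) :
    ∀ p : OpP (Option X) Ω ar, OpW.subst z (p.plug v) = OpP.subst (OpW.subst z v) p
  | .letter none => rfl
  | .letter (some _) => rfl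
  | .node δ a => by rw [OpP.plug, OpW.subst, OpP.subst, OpP.subst, OpArgs.substA_plug]
theorem OpW.subst_plug (z : OpW X Ω ar) (v : OpW (Option X) Ω ar) :
    ∀ u : OpW (Option X) Ω ar, OpW.subst z (u.plug v) = OpW.subst (OpW.subst z v) u
  | .single p => by rw [OpW.plug, OpW.subst, OpP.subst_plug]
  | .cons p u => by
      rw [OpW.plug, OpW.subst_append, OpP.subst_plug, OpW.subst_plug, OpW.subst]
theorem OpArgs.substA_plug (z : OpW X Ω ar) (v : OpW (Option X) Ω ar) :
    ∀ {n : ℕ} (a : OpArgs (Option X) Ω ar n),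
      OpArgs.substA z (a.plug v) = OpArgs.substA (OpW.subst z v) a
  | _, .nil => rfl
  | _, .cons w a => by
      rw [OpArgs.plug, OpArgs.substA, OpW.subst_plug, OpArgs.substA_plug, OpArgs.substA]
end

mutual
theorem OpP.cnt_plug (v : OpW (Option X) Ω ar) : ∀ p : OpP (Option X) Ω ar,
    (p.plug v).cnt starWeight = p.cnt starWeight * v.cnt starWeight
  | .letter none => by simp [OpP.plug, OpP.cnt, starWeight]
  | .letter (some _) => by simp [OpP.plug, OpP.cnt, OpW.cnt, starWeight]
  | .node δ a => by rw [OpP.plug, OpW.cnt, OpP.cnt, OpP.cnt, OpArgs.cntA_plug]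
theorem OpW.cnt_plug (v : OpW (Option X) Ω ar) : ∀ u : OpW (Option X) Ω ar,
    (u.plug v).cnt starWeight = u.cnt starWeight * v.cnt starWeight
  | .single p => by rw [OpW.plug, OpP.cnt_plug, OpW.cnt]
  | .cons p u => by
      rw [OpW.plug, OpW.cnt_append, OpP.cnt_plug, OpW.cnt_plug, OpW.cnt, add_mul]
theorem OpArgs.cntA_plug (v : OpW (Option X) Ω ar) : ∀ {n : ℕ} (a : OpArgs (Option X) Ω ar n),
    (a.plug v).cntA starWeight = a.cntA starWeight * v.cnt starWeight
  | _, .nil => by simp [OpArgs.plug, OpArgs.cntA]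
  | _, .cons w a => by
      rw [OpArgs.plug, OpArgs.cntA, OpW.cnt_plug, OpArgs.cntA_plug, OpArgs.cntA, add_mul]
end

theorem substW_plug (u v : OpW (Option X) Ω ar) (z : OpW X Ω ar) :
    substW (u.plug v) z = substW u (substW v z) :=
  OpW.subst_plug z v u

theorem IsStar.plug {u v : OpW (Option X) Ω ar} (hu : IsStar u) (hv : IsStar v) :
    IsStar (u.plug v) := by
  rw [IsStar, starCt_eq_cnt] at hu hv ⊢
  rw [OpW.cnt_plug, hu, hv]

theorem OpW.toListP_subst (z : OpW X Ω ar) : ∀ u : OpW (Option X) Ω ar,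
    (OpW.subst z u).toListP = u.toListP.flatMap fun p => (OpP.subst z p).toListP
  | .single p => by simp [OpW.subst, OpW.toListP]
  | .cons p u => by simp [OpW.subst, OpW.toListP, OpW.toListP_append, OpW.toListP_subst z u]

theorem flatMap_subst_map_embed (z : OpW X Ω ar) (l : List (OpP X Ω ar)) :
    (l.map OpP.embed).flatMap (fun p => (OpP.subst z p).toListP) = l := by
  induction l with
  | nil => rfl
  | cons p l ih => simp [OpP.subst_embed, OpW.toListP, ih]

@[simp]
theorem OpP.subst_star (z : OpW X Ω ar) : OpP.subst z (.letter none) = z := rfl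

theorem OpP.eq_star_or_length_toListP_subst (z : OpW X Ω ar) :
    ∀ p : OpP (Option X) Ω ar, p = .letter none ∨ (OpP.subst z p).toListP.length = 1
  | .letter none => .inl rfl
  | .letter (some _) => .inr rfl
  | .node _ _ => .inr rfl

def starCtx (l : List (OpP X Ω ar)) (p : OpP (Option X) Ω ar) (r : List (OpP X Ω ar)) :
    OpW (Option X) Ω ar :=
  (l.map OpP.embed).foldr OpW.cons (OpW.ofCons p (r.map OpP.embed))

section starCtx

variable (l r : List (OpP X Ω ar)) (p : OpP (Option X) Ω ar)

theorem toListP_starCtx : (starCtx l p r).toListP = l.map OpP.embed ++ p :: r.map OpP.embed := by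
  rw [starCtx, OpW.toListP_foldr_cons, OpW.toListP_ofCons]

theorem toListP_substW_starCtx (z : OpW X Ω ar) :
    (substW (starCtx l p r) z).toListP = l ++ (OpP.subst z p).toListP ++ r := by
  rw [substW, OpW.toListP_subst, toListP_starCtx]
  simp [flatMap_subst_map_embed]

theorem isStar_starCtx_iff : IsStar (starCtx l p r) ↔ p.cnt starWeight = 1 := by
  rw [IsStar, starCt_eq_cnt, OpW.cnt_eq_sum, toListP_starCtx]
  simp [Function.comp_def, OpP.cnt_embed]

end starCtx

theorem IsStar.exists_eq_starCtx {u : OpW (Option X) Ω ar} (h : IsStar u) :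
    ∃ l p r, u = starCtx l p r ∧ p.cnt starWeight = 1 := by
  rw [IsStar, starCt_eq_cnt, OpW.cnt_eq_sum] at h
  obtain ⟨l, p, r, hu, hp, hl, hr⟩ := List.exists_eq_append_cons_of_sum_map_eq_one h
  lift l to List (OpP X Ω ar) using hl
  lift r to List (OpP X Ω ar) using hr
  exact ⟨l, p, r, OpW.toListP_injective (by rw [hu, toListP_starCtx]), hp⟩

def OpP.starNode (δ : Ω) (A B : List (OpW X Ω ar)) (v : OpW (Option X) Ω ar)
    (h : A.length + B.length + 1 = ar δ) : OpP (Option X) Ω ar :=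
  nodeOfList δ (A.map OpW.embed ++ v :: B.map OpW.embed) (by simp; omega)

section starNode

variable (δ : Ω) (A B : List (OpW X Ω ar)) (v : OpW (Option X) Ω ar)
  (h : A.length + B.length + 1 = ar δ)

theorem OpP.subst_starNode (z : OpW X Ω ar) :
    OpP.subst z (starNode δ A B v h) =
      .single (nodeOfList δ (A ++ substW v z :: B) (by simp; omega)) := by
  rw [starNode, subst_nodeOfList]
  simp [substW]

theorem OpP.cnt_starNode : (starNode δ A B v h).cnt starWeight = v.cnt starWeight := by
  simp [starNode, cnt_nodeOfList, Function.comp_def, OpW.cnt_embed]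

theorem OpP.opCnt_lt_opCnt_starNode : v.opCnt 1 < (starNode δ A B v h).opCnt 1 := by
  simp only [starNode, opCnt_nodeOfList, List.map_append, List.map_cons, List.sum_append,
    List.sum_cons, Pi.one_apply]
  omega

end starNode

theorem opCnt_lt_opCnt_starCtx_starNode (l r : List (OpP X Ω ar)) (δ : Ω)
    (A B : List (OpW X Ω ar)) (v : OpW (Option X) Ω ar) (h : A.length + B.length + 1 = ar δ) :
    v.opCnt 1 < (starCtx l (.starNode δ A B v h) r).opCnt 1 := by
  have := OpP.opCnt_lt_opCnt_starNode δ A B v h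
  rw [OpW.opCnt_eq_sum 1 (starCtx l _ r), toListP_starCtx]
  simp only [List.map_append, List.map_cons, List.sum_append, List.sum_cons]
  omega
theorem OpP.eq_star_or_eq_starNode {p : OpP (Option X) Ω ar} (hp : p.cnt starWeight = 1) :
    p = .letter none ∨ ∃ δ A B v h, p = starNode δ A B v h ∧ IsStar v := by
  rcases p with (_ | x) | ⟨δ, a⟩
  · exact .inl rfl
  · exact absurd hp (by simp [OpP.cnt, starWeight])
  · rw [node_eq_nodeOfList, cnt_nodeOfList] at hp
    obtain ⟨A, v, B, ha, hv, hA, hB⟩ := List.exists_eq_append_cons_of_sum_map_eq_one hp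
    lift A to List (OpW X Ω ar) using hA
    lift B to List (OpW X Ω ar) using hB
    have hlen := a.length_toList
    simp only [ha, List.length_append, List.length_map, List.length_cons] at hlen
    refine .inr ⟨δ, A, B, v, by omega, ?_, hv⟩
    rw [node_eq_nodeOfList, starNode, nodeOfList_inj]
    simpa

/-! ### Relative position of two occurrences -/

/-- Star words enter only through the words they produce. In `separate`, `c₁ z` is the common
word with `z` at the occurrence of `w₂` and `⋆` at that of `w₁`, and `c₂ z` the other way
round. -/
inductive Placement (u₁ : OpW (Option X) Ω ar) (w₁ : OpW X Ω ar) (u₂ : OpW (Option X) Ω ar)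
    (w₂ : OpW X Ω ar) : Prop
  | separate (c₁ c₂ : OpW X Ω ar → OpW (Option X) Ω ar)
      (hc₁ : ∀ z, IsStar (c₁ z)) (hc₂ : ∀ z, IsStar (c₂ z))
      (comm : ∀ z₁ z₂, substW (c₁ z₂) z₁ = substW (c₂ z₁) z₂)
      (h₁ : ∀ z, substW u₁ z = substW (c₁ w₂) z) (h₂ : ∀ z, substW u₂ z = substW (c₂ w₁) z)
  | nested (v : OpW (Option X) Ω ar) (hv : IsStar v) (hw : substW v w₂ = w₁)
      (h : ∀ z, substW u₂ z = substW u₁ (substW v z))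
  | overlap (a b : OpW X Ω ar) (U : OpW (Option X) Ω ar) (hU : IsStar U)
      (hw : w₁ * a = b * w₂) (hbre : (w₁ * a).bre < w₁.bre + w₂.bre)
      (h₁ : ∀ z, substW u₁ z = substW U (z * a)) (h₂ : ∀ z, substW u₂ z = substW U (b * z))

theorem Placement.lift {u₁ u₂ u₁' u₂' U₀ : OpW (Option X) Ω ar} {w₁ w₂ : OpW X Ω ar}
    (hU₀ : IsStar U₀) (h₁ : ∀ z, substW u₁' z = substW U₀ (substW u₁ z))
    (h₂ : ∀ z, substW u₂' z = substW U₀ (substW u₂ z)) :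
    Placement u₁ w₁ u₂ w₂ → Placement u₁' w₁ u₂' w₂
  | separate c₁ c₂ hc₁ hc₂ comm hu₁ hu₂ =>
      .separate (fun z => U₀.plug (c₁ z)) (fun z => U₀.plug (c₂ z))
        (fun z => hU₀.plug (hc₁ z)) (fun z => hU₀.plug (hc₂ z))
        (fun z₁ z₂ => by rw [substW_plug, substW_plug, comm])
        (fun z => by rw [substW_plug, h₁, hu₁]) (fun z => by rw [substW_plug, h₂, hu₂])
  | nested v hv hw h => .nested v hv hw fun z => by rw [h₂, h, h₁]
  | overlap a b U hU hw hbre hu₁ hu₂ =>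
      .overlap a b (U₀.plug U) (hU₀.plug hU) hw hbre
        (fun z => by rw [substW_plug, h₁, hu₁]) (fun z => by rw [substW_plug, h₂, hu₂])

section starCtx

variable (l r : List (OpP X Ω ar))

theorem placement_separate_of_starCtx (m : List (OpP X Ω ar)) {p₁ p₂ : OpP (Option X) Ω ar}
    (hp₁ : p₁.cnt starWeight = 1) (hp₂ : p₂.cnt starWeight = 1) (w₁ w₂ : OpW X Ω ar) :
    Placement (starCtx l p₁ (m ++ (OpP.subst w₂ p₂).toListP ++ r)) w₁
      (starCtx (l ++ (OpP.subst w₁ p₁).toListP ++ m) p₂ r) w₂ :=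
  .separate (fun z => starCtx l p₁ (m ++ (OpP.subst z p₂).toListP ++ r))
    (fun z => starCtx (l ++ (OpP.subst z p₁).toListP ++ m) p₂ r)
    (fun _ => (isStar_starCtx_iff ..).2 hp₁) (fun _ => (isStar_starCtx_iff ..).2 hp₂)
    (fun _ _ => OpW.toListP_injective (by simp [toListP_substW_starCtx]))
    (fun _ => rfl) (fun _ => rfl)

theorem placement_nested_of_starCtx (b c : List (OpP X Ω ar)) {p₂ : OpP (Option X) Ω ar}
    (hp₂ : p₂.cnt starWeight = 1) {w₁ w₂ : OpW X Ω ar}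
    (hw : w₁.toListP = b ++ (OpP.subst w₂ p₂).toListP ++ c) :
    Placement (starCtx l (.letter none) r) w₁ (starCtx (l ++ b) p₂ (c ++ r)) w₂ :=
  .nested (starCtx b p₂ c) ((isStar_starCtx_iff ..).2 hp₂)
    (OpW.toListP_injective (by rw [toListP_substW_starCtx, hw]))
    (fun _ => OpW.toListP_injective (by simp [toListP_substW_starCtx, OpP.subst]))

theorem placement_overlap_of_starCtx {w₁ w₂ a b : OpW X Ω ar} (hw : w₁ * a = b * w₂)
    (ha : a.bre < w₂.bre) :
    Placement (starCtx l (.letter none) (a.toListP ++ r)) w₁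
      (starCtx (l ++ b.toListP) (.letter none) r) w₂ :=
  .overlap a b (starCtx l (.letter none) r) ((isStar_starCtx_iff ..).2 rfl) hw
    (by simpa [OpW.bre, OpW.toListP_mul] using ha)
    (fun _ => OpW.toListP_injective (by simp [toListP_substW_starCtx, OpP.subst, OpW.toListP_mul]))
    (fun _ => OpW.toListP_injective (by simp [toListP_substW_starCtx, OpP.subst, OpW.toListP_mul]))

variable (δ : Ω) (A B : List (OpW X Ω ar))

theorem isStar_starCtx_starNode_iff {v : OpW (Option X) Ω ar}
    (h : A.length + B.length + 1 = ar δ) :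
    IsStar (starCtx l (.starNode δ A B v h) r) ↔ IsStar v := by
  rw [isStar_starCtx_iff, OpP.cnt_starNode, IsStar, starCt_eq_cnt]

theorem substW_starCtx_starNode (v : OpW (Option X) Ω ar) (h : A.length + B.length + 1 = ar δ)
    (z : OpW X Ω ar) :
    substW (starCtx l (.starNode δ A B v h) r) z =
      substW (starCtx l (.starNode δ A B (.single (.letter none)) h) r) (substW v z) :=
  OpW.toListP_injective (by simp only [toListP_substW_starCtx, OpP.subst_starNode]; rfl)

theorem placement_separate_of_starNode (E : List (OpW X Ω ar)) {v₁ v₂ : OpW (Option X) Ω ar}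
    (hv₁ : IsStar v₁) (hv₂ : IsStar v₂) {w₁ w₂ : OpW X Ω ar}
    (h₁ : A.length + (E ++ substW v₂ w₂ :: B).length + 1 = ar δ)
    (h₂ : (A ++ substW v₁ w₁ :: E).length + B.length + 1 = ar δ) :
    Placement (starCtx l (.starNode δ A (E ++ substW v₂ w₂ :: B) v₁ h₁) r) w₁
      (starCtx l (.starNode δ (A ++ substW v₁ w₁ :: E) B v₂ h₂) r) w₂ :=
  .separate (fun z => starCtx l (.starNode δ A (E ++ substW v₂ z :: B) v₁ (by simpa using h₁)) r)
    (fun z => starCtx l (.starNode δ (A ++ substW v₁ z :: E) B v₂ (by simpa using h₂)) r)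
    (fun _ => (isStar_starCtx_starNode_iff ..).2 hv₁)
    (fun _ => (isStar_starCtx_starNode_iff ..).2 hv₂)
    (fun _ _ => OpW.toListP_injective (by simp [toListP_substW_starCtx, OpP.subst_starNode]))
    (fun _ => rfl) (fun _ => rfl)

end starCtx

theorem placement_of_starNode (l r : List (OpP X Ω ar)) (δ : Ω)
    {A₁ B₁ A₂ B₂ : List (OpW X Ω ar)} {v₁ v₂ : OpW (Option X) Ω ar} (hv₁ : IsStar v₁)
    (hv₂ : IsStar v₂) {w₁ w₂ : OpW X Ω ar} (h₁ : A₁.length + B₁.length + 1 = ar δ)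
    (h₂ : A₂.length + B₂.length + 1 = ar δ)
    (ih : substW v₁ w₁ = substW v₂ w₂ → Placement v₁ w₁ v₂ w₂ ∨ Placement v₂ w₂ v₁ w₁)
    (h : A₁ ++ substW v₁ w₁ :: B₁ = A₂ ++ substW v₂ w₂ :: B₂) :
    Placement (starCtx l (.starNode δ A₁ B₁ v₁ h₁) r) w₁
        (starCtx l (.starNode δ A₂ B₂ v₂ h₂) r) w₂ ∨
      Placement (starCtx l (.starNode δ A₂ B₂ v₂ h₂) r) w₂
        (starCtx l (.starNode δ A₁ B₁ v₁ h₁) r) w₁ := by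
  rcases List.append_cons_eq_append_cons_cases h with
    ⟨rfl, hv, rfl⟩ | ⟨E, rfl, rfl⟩ | ⟨E, rfl, rfl⟩
  · have hU := (isStar_starCtx_starNode_iff l r δ A₁ B₁ (v := .single (.letter none)) h₁).2 rfl
    exact (ih hv).imp
      (.lift hU (fun _ => substW_starCtx_starNode ..) (fun _ => substW_starCtx_starNode ..))
      (.lift hU (fun _ => substW_starCtx_starNode ..) (fun _ => substW_starCtx_starNode ..))
  · exact .inl (placement_separate_of_starNode l r δ A₁ B₂ E hv₁ hv₂ h₁ h₂)
  · exact .inr (placement_separate_of_starNode l r δ A₂ B₁ E hv₂ hv₁ h₂ h₁)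

theorem placement_of_subst_starNode_eq (l r : List (OpP X Ω ar)) {δ : Ω}
    {A B : List (OpW X Ω ar)} {v₁ : OpW (Option X) Ω ar} {h₁ : A.length + B.length + 1 = ar δ}
    (hv₁ : IsStar v₁) {p₂ : OpP (Option X) Ω ar} (hp₂ : p₂.cnt starWeight = 1)
    {w₁ w₂ : OpW X Ω ar}
    (ih : ∀ v₂ : OpW (Option X) Ω ar, v₂.opCnt 1 < (starCtx l p₂ r).opCnt 1 → IsStar v₂ →
      substW v₁ w₁ = substW v₂ w₂ → Placement v₁ w₁ v₂ w₂ ∨ Placement v₂ w₂ v₁ w₁)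
    (hs : OpP.subst w₁ (.starNode δ A B v₁ h₁) = OpP.subst w₂ p₂) :
    Placement (starCtx l (.starNode δ A B v₁ h₁) r) w₁ (starCtx l p₂ r) w₂ ∨
      Placement (starCtx l p₂ r) w₂ (starCtx l (.starNode δ A B v₁ h₁) r) w₁ := by
  rcases OpP.eq_star_or_eq_starNode hp₂ with rfl | ⟨δ₂, A₂, B₂, v₂, h₂, rfl, hv₂⟩
  · have hw₂ : w₂.toListP = [] ++ (OpP.subst w₁ (.starNode δ A B v₁ h₁)).toListP ++ [] := by
      simp [hs]
    have hp₁ : (OpP.starNode δ A B v₁ h₁).cnt starWeight = 1 := by rwa [OpP.cnt_starNode]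
    exact .inr (by simpa using placement_nested_of_starCtx l r [] [] hp₁ hw₂)
  · rw [OpP.subst_starNode, OpP.subst_starNode, OpW.single.injEq, OpP.nodeOfList_inj] at hs
    obtain ⟨rfl, hargs⟩ := hs
    exact placement_of_starNode l r δ hv₁ hv₂ h₁ h₂
      (ih v₂ (opCnt_lt_opCnt_starCtx_starNode ..) hv₂) hargs

theorem placement_of_starCtx {l₁ r₁ l₂ r₂ : List (OpP X Ω ar)} {p₁ p₂ : OpP (Option X) Ω ar}
    (hp₁ : p₁.cnt starWeight = 1) (hp₂ : p₂.cnt starWeight = 1) {w₁ w₂ : OpW X Ω ar}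
    (ih : ∀ v₁ v₂ : OpW (Option X) Ω ar, v₁.opCnt 1 < (starCtx l₁ p₁ r₁).opCnt 1 →
      v₂.opCnt 1 < (starCtx l₂ p₂ r₂).opCnt 1 → IsStar v₁ → IsStar v₂ →
      substW v₁ w₁ = substW v₂ w₂ → Placement v₁ w₁ v₂ w₂ ∨ Placement v₂ w₂ v₁ w₁)
    (h : substW (starCtx l₁ p₁ r₁) w₁ = substW (starCtx l₂ p₂ r₂) w₂)
    (hl : l₁.length ≤ l₂.length) :
    Placement (starCtx l₁ p₁ r₁) w₁ (starCtx l₂ p₂ r₂) w₂ ∨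
      Placement (starCtx l₂ p₂ r₂) w₂ (starCtx l₁ p₁ r₁) w₁ := by
  have h' := congrArg OpW.toListP h
  rw [toListP_substW_starCtx, toListP_substW_starCtx] at h'
  have hs₁ := List.length_pos_iff.2 (OpW.toListP_ne_nil (OpP.subst w₁ p₁))
  have hs₂ := List.length_pos_iff.2 (OpW.toListP_ne_nil (OpP.subst w₂ p₂))
  rcases List.append_append_eq_append_append_cases h' hl with
    ⟨m, rfl, rfl⟩ | ⟨b, c, hs, rfl, rfl⟩ | ⟨c, hc, rfl, hs, rfl⟩ |
      ⟨b, a, hb, ha, hlen, hs, rfl, rfl⟩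
  · exact .inl (placement_separate_of_starCtx l₁ r₂ m hp₁ hp₂ w₁ w₂)
  · rcases OpP.eq_star_or_eq_starNode hp₁ with rfl | ⟨δ, A₁, B₁, v₁, h₁, rfl, hv₁⟩
    · exact .inl (placement_nested_of_starCtx l₁ r₁ b c hp₂ hs)
    -- `w₂` occurs inside the single prime factor `p₁|_{w₁}`, so it covers all of it
    have hlen := congrArg List.length hs
    simp only [OpP.subst_starNode, OpW.toListP, List.length_singleton, List.length_append] at hlen
    obtain ⟨rfl, rfl⟩ : b = [] ∧ c = [] := by simp only [← List.length_eq_zero_iff]; omega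
    simp only [List.nil_append, List.append_nil] at hs ih ⊢
    exact placement_of_subst_starNode_eq l₁ r₁ hv₁ hp₂
      (fun v₂ h₂ hv₂ => ih v₁ v₂ (opCnt_lt_opCnt_starCtx_starNode ..) h₂ hv₁ hv₂)
      (OpW.toListP_injective hs)
  · -- `p₂|_{w₂}` has at least two prime factors, so `p₂ = ⋆`
    obtain rfl : p₂ = .letter none := (OpP.eq_star_or_length_toListP_subst w₂ p₂).resolve_right
      fun h₁ => by
        rw [hs, List.length_append] at h₁
        have := List.length_pos_iff.2 hc
        omega
    have hw₂ : w₂.toListP = [] ++ (OpP.subst w₁ p₁).toListP ++ c := by simpa using hs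
    exact .inr (by simpa using placement_nested_of_starCtx l₂ r₂ [] c hp₁ hw₂)
  · -- a proper overlap forces both stars to stand at the top level
    have hlen' := congrArg List.length hs
    simp only [List.length_append] at hlen'
    have hb' := List.length_pos_iff.2 hb
    obtain rfl : p₁ = .letter none := (OpP.eq_star_or_length_toListP_subst w₁ p₁).resolve_right
      fun h₁ => by omega
    obtain rfl : p₂ = .letter none := (OpP.eq_star_or_length_toListP_subst w₂ p₂).resolve_right
      fun h₂ => by have := List.length_pos_iff.2 ha; omega
    obtain ⟨a, rfl⟩ := OpW.exists_toListP_eq ha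
    obtain ⟨b, rfl⟩ := OpW.exists_toListP_eq hb
    exact .inl (placement_overlap_of_starCtx l₁ r₂
      (OpW.toListP_injective (by simpa [OpW.toListP_mul] using hs)) hlen)

theorem placement_or_placement_of_substW_eq {u₁ u₂ : OpW (Option X) Ω ar} {w₁ w₂ : OpW X Ω ar}
    (hu₁ : IsStar u₁) (hu₂ : IsStar u₂) (h : substW u₁ w₁ = substW u₂ w₂) :
    Placement u₁ w₁ u₂ w₂ ∨ Placement u₂ w₂ u₁ w₁ := by
  induction hn : u₁.opCnt 1 + u₂.opCnt 1 using Nat.strong_induction_on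
    generalizing u₁ u₂ w₁ w₂ with
  | _ n ih =>
  obtain ⟨l₁, p₁, r₁, rfl, hp₁⟩ := hu₁.exists_eq_starCtx
  obtain ⟨l₂, p₂, r₂, rfl, hp₂⟩ := hu₂.exists_eq_starCtx
  have ih' (v₁ v₂ : OpW (Option X) Ω ar) (h₁ : v₁.opCnt 1 < (starCtx l₁ p₁ r₁).opCnt 1)
      (h₂ : v₂.opCnt 1 < (starCtx l₂ p₂ r₂).opCnt 1) (hv₁ : IsStar v₁) (hv₂ : IsStar v₂)
      {w₁ w₂ : OpW X Ω ar} (h : substW v₁ w₁ = substW v₂ w₂) :=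
    ih _ (by omega) hv₁ hv₂ h rfl
  rcases le_total l₁.length l₂.length with hl | hl
  · exact placement_of_starCtx hp₁ hp₂ (fun v₁ v₂ h₁ h₂ hv₁ hv₂ => ih' v₁ v₂ h₁ h₂ hv₁ hv₂) h hl
  · exact (placement_of_starCtx hp₂ hp₁
      (fun v₂ v₁ h₂ h₁ hv₂ hv₁ h => (ih' v₁ v₂ h₁ h₂ hv₁ hv₂ h.symm).symm) h.symm hl).symm

/-! ### Substitution of polynomials and triviality modulo `(S, w)` -/

section Algebra

variable {K : Type*} [CommRing K]

theorem substPoly_eq_mapDomain (u : OpW (Option X) Ω ar) (s : OpAlg K X Ω ar) :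
    substPoly u s = MonoidAlgebra.mapDomainLinearMap K K (substW u) s := by
  simp [substPoly, MonoidAlgebra.mapDomainLinearMap, Finsupp.mapDomain]

theorem substPoly_sub (u : OpW (Option X) Ω ar) (s t : OpAlg K X Ω ar) :
    substPoly u (s - t) = substPoly u s - substPoly u t := by
  simp only [substPoly_eq_mapDomain, map_sub]

theorem substPoly_congr {u u' : OpW (Option X) Ω ar} (h : ∀ z, substW u z = substW u' z)
    (s : OpAlg K X Ω ar) : substPoly u s = substPoly u' s := by
  simp only [substPoly_eq_mapDomain, funext h]

theorem substPoly_plug (u v : OpW (Option X) Ω ar) (s : OpAlg K X Ω ar) :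
    substPoly (u.plug v) s = substPoly u (substPoly v s) := by
  have : substW (u.plug v) = substW u ∘ substW v := funext (substW_plug u v)
  simp only [substPoly_eq_mapDomain, this, MonoidAlgebra.mapDomainLinearMap_comp,
    LinearMap.comp_apply]

theorem mul_single_one_eq_mapDomain (s : OpAlg K X Ω ar) (a : OpW X Ω ar) :
    s * MonoidAlgebra.single a 1 = MonoidAlgebra.mapDomainLinearMap K K (· * a) s := by
  induction s using MonoidAlgebra.induction_linear with
  | zero => simp
  | add x y hx hy => rw [add_mul, hx, hy, map_add]
  | single m r => simp

theorem single_one_mul_eq_mapDomain (s : OpAlg K X Ω ar) (b : OpW X Ω ar) :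
    MonoidAlgebra.single b 1 * s = MonoidAlgebra.mapDomainLinearMap K K (b * ·) s := by
  induction s using MonoidAlgebra.induction_linear with
  | zero => simp
  | add x y hx hy => rw [mul_add, hx, hy, map_add]
  | single m r => simp

theorem substPoly_mul_single_one {u U : OpW (Option X) Ω ar} {a : OpW X Ω ar}
    (h : ∀ z, substW u z = substW U (z * a)) (s : OpAlg K X Ω ar) :
    substPoly U (s * MonoidAlgebra.single a 1) = substPoly u s := by
  have : substW u = substW U ∘ (· * a) := funext h
  simp only [substPoly_eq_mapDomain, mul_single_one_eq_mapDomain, this,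
    MonoidAlgebra.mapDomainLinearMap_comp, LinearMap.comp_apply]

theorem substPoly_single_one_mul {u U : OpW (Option X) Ω ar} {b : OpW X Ω ar}
    (h : ∀ z, substW u z = substW U (b * z)) (s : OpAlg K X Ω ar) :
    substPoly U (MonoidAlgebra.single b 1 * s) = substPoly u s := by
  have : substW u = substW U ∘ (b * ·) := funext h
  simp only [substPoly_eq_mapDomain, single_one_mul_eq_mapDomain, this,
    MonoidAlgebra.mapDomainLinearMap_comp, LinearMap.comp_apply]

theorem sum_smul_substPoly_comm {c₁ c₂ : OpW X Ω ar → OpW (Option X) Ω ar}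
    (comm : ∀ z₁ z₂, substW (c₁ z₂) z₁ = substW (c₂ z₁) z₂) (s₁ s₂ : OpAlg K X Ω ar) :
    ∑ z ∈ s₂.coeff.support, s₂.coeff z • substPoly (c₁ z) s₁ =
      ∑ z ∈ s₁.coeff.support, s₁.coeff z • substPoly (c₂ z) s₂ := by
  simp only [substPoly, Finsupp.sum, Finset.smul_sum, MonoidAlgebra.smul_single, smul_eq_mul]
  rw [Finset.sum_comm]
  refine Finset.sum_congr rfl fun z₁ _ => Finset.sum_congr rfl fun z₂ _ => ?_
  rw [comm, mul_comm]

variable {lt : OpW X Ω ar → OpW X Ω ar → Prop}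

theorem HasLead.eq [Std.Asymm lt] {f : OpAlg K X Ω ar} {a b : OpW X Ω ar}
    (ha : HasLead lt f a) (hb : HasLead lt f b) : a = b := by
  by_contra hne
  exact Std.Asymm.asymm _ _ (ha.2 b hb.1 (Ne.symm hne)) (hb.2 a ha.1 hne)

open scoped Classical in
theorem HasLead.lt_of_mem_erase {f : OpAlg K X Ω ar} {a z : OpW X Ω ar} (ha : HasLead lt f a)
    (hz : z ∈ f.coeff.support.erase a) : lt z a :=
  ha.2 z (Finset.mem_of_mem_erase hz) (Finset.ne_of_mem_erase hz)

theorem HasLead.monicAt [Std.Asymm lt] {f : OpAlg K X Ω ar} {a : OpW X Ω ar}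
    (ha : HasLead lt f a) (hf : ∃ b, MonicAt lt f b) : MonicAt lt f a := by
  obtain ⟨b, hb, hb₁⟩ := hf
  exact ⟨ha, ha.eq hb ▸ hb₁⟩

end Algebra

section TrivialMod

variable {K : Type*} [CommRing K] {lt : OpW X Ω ar → OpW X Ω ar → Prop}
  {S : Set (OpAlg K X Ω ar)}

def StarMonotone (lt : OpW X Ω ar → OpW X Ω ar → Prop) : Prop :=
  ∀ u : OpW (Option X) Ω ar, IsStar u → ∀ w v : OpW X Ω ar, lt v w → lt (substW u v) (substW u w)

theorem TrivialMod.symm {w : OpW X Ω ar} {p q : OpAlg K X Ω ar}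
    (h : TrivialMod lt S w (p - q)) : TrivialMod lt S w (q - p) := by
  rw [TrivialMod, ← neg_sub]
  exact Submodule.neg_mem _ h

theorem TrivialMod.substPoly (hmono : StarMonotone lt) {U : OpW (Option X) Ω ar} (hU : IsStar U)
    {w : OpW X Ω ar} {p : OpAlg K X Ω ar} (h : TrivialMod lt S w p) :
    TrivialMod lt S (substW U w) (substPoly U p) := by
  rw [substPoly_eq_mapDomain]
  refine (Submodule.span_le (p := (Submodule.span K _).comap
    (MonoidAlgebra.mapDomainLinearMap K K (substW U)))).2 ?_ h
  rintro _ ⟨v, t, wt, hv, ht, hlt, hvw, rfl⟩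
  refine Submodule.subset_span ⟨U.plug v, t, wt, hU.plug hv, ht, hlt, ?_, ?_⟩
  · rw [substW_plug]
    exact hmono U hU _ _ hvw
  · rw [substPoly_plug, substPoly_eq_mapDomain U]

theorem trivialMod_sum_smul_substPoly {ι : Type*} (T : Finset ι) (a : ι → K)
    {c : ι → OpW (Option X) Ω ar} {t : OpAlg K X Ω ar} {wt w : OpW X Ω ar} (ht : t ∈ S)
    (hlt : HasLead lt t wt) (hc : ∀ i ∈ T, IsStar (c i) ∧ lt (substW (c i) wt) w) :
    TrivialMod lt S w (∑ i ∈ T, a i • substPoly (c i) t) :=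
  Submodule.sum_mem _ fun i hi => Submodule.smul_mem _ _
    (Submodule.subset_span ⟨c i, t, wt, (hc i hi).1, ht, hlt, (hc i hi).2, rfl⟩)

open scoped Classical in
theorem trivialMod_of_separate (hmono : StarMonotone lt) {s₁ s₂ : OpAlg K X Ω ar}
    (hs₁ : s₁ ∈ S) (hs₂ : s₂ ∈ S) {w₁ w₂ : OpW X Ω ar} (hm₁ : MonicAt lt s₁ w₁)
    (hm₂ : MonicAt lt s₂ w₂) {u₁ u₂ : OpW (Option X) Ω ar}
    {c₁ c₂ : OpW X Ω ar → OpW (Option X) Ω ar} (hc₁ : ∀ z, IsStar (c₁ z))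
    (hc₂ : ∀ z, IsStar (c₂ z)) (comm : ∀ z₁ z₂, substW (c₁ z₂) z₁ = substW (c₂ z₁) z₂)
    (h₁ : ∀ z, substW u₁ z = substW (c₁ w₂) z) (h₂ : ∀ z, substW u₂ z = substW (c₂ w₁) z) :
    TrivialMod lt S (substW u₁ w₁) (substPoly u₁ s₁ - substPoly u₂ s₂) := by
  have expand (s t : OpAlg K X Ω ar) (w₀ : OpW X Ω ar) (hm : MonicAt lt s w₀)
      (c : OpW X Ω ar → OpW (Option X) Ω ar) :
      substPoly (c w₀) t = ∑ z ∈ s.coeff.support, s.coeff z • substPoly (c z) t -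
        ∑ z ∈ s.coeff.support.erase w₀, s.coeff z • substPoly (c z) t := by
    rw [← Finset.add_sum_erase _ _ hm.1.1, hm.2, one_smul, add_sub_cancel_right]
  rw [substPoly_congr h₁, substPoly_congr h₂, expand s₂ s₁ w₂ hm₂ c₁, expand s₁ s₂ w₁ hm₁ c₂,
    sum_smul_substPoly_comm comm, sub_sub_sub_cancel_left]
  refine Submodule.sub_mem _ (trivialMod_sum_smul_substPoly _ _ hs₂ hm₂.1 fun z hz => ⟨hc₂ z, ?_⟩)
    (trivialMod_sum_smul_substPoly _ _ hs₁ hm₁.1 fun z hz => ⟨hc₁ z, ?_⟩)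
  · rw [← comm, h₁]
    exact hmono _ (hc₁ w₂) _ _ (hm₁.1.lt_of_mem_erase hz)
  · rw [comm, h₁, comm]
    exact hmono _ (hc₂ w₁) _ _ (hm₂.1.lt_of_mem_erase hz)

theorem Placement.trivialMod (hmono : StarMonotone lt) (hS : IsGSB lt S)
    {s₁ s₂ : OpAlg K X Ω ar} (hs₁ : s₁ ∈ S) (hs₂ : s₂ ∈ S) {w₁ w₂ : OpW X Ω ar}
    (hm₁ : MonicAt lt s₁ w₁) (hm₂ : MonicAt lt s₂ w₂) {u₁ u₂ : OpW (Option X) Ω ar}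
    (hu₁ : IsStar u₁) :
    Placement u₁ w₁ u₂ w₂ → TrivialMod lt S (substW u₁ w₁) (substPoly u₁ s₁ - substPoly u₂ s₂)
  | separate _ _ hc₁ hc₂ comm h₁ h₂ =>
      trivialMod_of_separate hmono hs₁ hs₂ hm₁ hm₂ hc₁ hc₂ comm h₁ h₂
  | nested v hv hw h => by
      have := (hS.2.2 s₁ hs₁ s₂ hs₂ w₁ w₂ v hm₁.1 hm₂.1 hv hw.symm).substPoly hmono hu₁
      rwa [substPoly_sub, ← substPoly_plug,
        substPoly_congr fun z => (substW_plug u₁ v z).trans (h z).symm] at this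
  | overlap a b U hU hw hbre h₁ h₂ => by
      have := (hS.2.1 s₁ hs₁ s₂ hs₂ w₁ w₂ a b hm₁.1 hm₂.1 hw hbre).substPoly hmono hU
      rwa [← h₁, substPoly_sub, substPoly_mul_single_one h₁, substPoly_single_one_mul h₂] at this

end TrivialMod

/-- **Lemma 3.3** (Bokut–Chen–Qiu). Let `>` (here `lt`, read `lt v w` as `v < w`) be a
monomial ordering on `𝔖(X)` (a well order such that `v < w` implies `u|_v < u|_w` for
every `⋆`-`Ω`-word `u`), and let `S` be a Gröbner–Shirshov basis in `K⟨X; Ω⟩`.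
If `u₁, u₂` are `⋆`-`Ω`-words, `s₁, s₂ ∈ S` have leading words `w₁, w₂`, and
`w = u₁|_{w₁} = u₂|_{w₂}`, then `u₁|_{s₁} ≡ u₂|_{s₂} mod (S, w)`, i.e.
`u₁|_{s₁} - u₂|_{s₂}` is a `K`-linear combination `Σᵢ αᵢ vᵢ|_{tᵢ}` with `tᵢ ∈ S` and
`vᵢ|_{t̄ᵢ} < w`. -/
theorem lemma_3_3 {K : Type*} [CommRing K] {X : Type u} {Ω : Type v} {ar : Ω → ℕ}
    (lt : OpW X Ω ar → OpW X Ω ar → Prop)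
    (hwell : IsWellOrder (OpW X Ω ar) lt)
    (hmono : ∀ u : OpW (Option X) Ω ar, IsStar u →
      ∀ w v : OpW X Ω ar, lt v w → lt (substW u v) (substW u w))
    (S : Set (OpAlg K X Ω ar)) (hS : IsGSB lt S)
    (u₁ u₂ : OpW (Option X) Ω ar) (hu₁ : IsStar u₁) (hu₂ : IsStar u₂)
    (s₁ s₂ : OpAlg K X Ω ar) (hs₁ : s₁ ∈ S) (hs₂ : s₂ ∈ S)
    (w₁ w₂ : OpW X Ω ar) (hl₁ : HasLead lt s₁ w₁) (hl₂ : HasLead lt s₂ w₂)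
    (w : OpW X Ω ar) (hw₁ : substW u₁ w₁ = w) (hw₂ : substW u₂ w₂ = w) :
    TrivialMod lt S w (substPoly u₁ s₁ - substPoly u₂ s₂) := by
  have hm₁ := hl₁.monicAt (hS.1 s₁ hs₁)
  have hm₂ := hl₂.monicAt (hS.1 s₂ hs₂)
  subst hw₁
  rcases placement_or_placement_of_substW_eq hu₁ hu₂ hw₂.symm with h | h
  · exact h.trivialMod hmono hS hs₁ hs₂ hm₁ hm₂ hu₁
  · exact hw₂ ▸ (h.trivialMod hmono hS hs₂ hs₁ hm₂ hm₁ hu₂).symm
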